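/- arXiv:1605.03854 — 2 statements merged into one kernel-verified Lean document; each statement's English description precedes it below -/
import Mathlib

section
/- Let V be a real vector space of dimension k + 2ℓ, let α₁,…,α_k be linearly independent linear functionals on V, and let β be an alternating bilinear form on V whose restriction to W = ⋂ᵢ ker αᵢ is nondegenerate. Then α₁ ∧ ⋯ ∧ α_k ∧ β^ℓ ≠ 0. -/
/-!
Choose `u₁, …, u_k` dual to the linearly independent `αᵢ`, and a Darboux family
`e₁, f₁, …, e_ℓ, f_ℓ` of the nondegenerate alternating form `β|_W` (split off a hyperbolic plane
`span {e, f}` and recurse on its `β`-orthogonal complement). Evaluate on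
`(u₁, …, u_k, e₁, f₁, …, e_ℓ, f_ℓ)`: since every `αᵢ` vanishes on `W`, a permutation contributes
only if it fixes the first `k` slots, and it must map each pair `{eⱼ, fⱼ}` onto a pair. Such a
permutation permutes the pairs (an even permutation of the slots) and swaps inside some pairs, and
each swap's sign cancels `β(fⱼ, eⱼ) = -1`. So every term is `0` or `1`, the identity gives `1`,
and the sum is positive.
-/

/-- Evaluation (up to a nonzero combinatorial normalization) of the form
`α₁ ∧ ⋯ ∧ α_k ∧ β^ℓ` on a tuple of `k + 2ℓ` vectors. -/
noncomputable def wedgeEval (V : Type*) (k ℓ : ℕ) (α : Fin k → V → ℝ) (β : V → V → ℝ)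
    (v : Fin (k + 2 * ℓ) → V) : ℝ :=
  ∑ σ : Equiv.Perm (Fin (k + 2 * ℓ)),
    ((Equiv.Perm.sign σ : ℤ) : ℝ) *
      ((∏ i : Fin k, α i (v (σ ⟨i.1, by have := i.2; omega⟩))) *
        ∏ j : Fin ℓ, β (v (σ ⟨k + 2 * j.1, by have := j.2; omega⟩))
            (v (σ ⟨k + 2 * j.1 + 1, by have := j.2; omega⟩)))

open Equiv Equiv.Perm Module LinearMap

theorem LinearIndependent.surjective_pi {ι K V : Type*} [Finite ι] [Field K] [AddCommGroup V]
    [Module K V] {α : ι → Dual K V} (hα : LinearIndependent K α) :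
    Function.Surjective (LinearMap.pi α) := by
  classical
  have := Fintype.ofFinite ι
  rw [← dualMap_injective_iff, injective_iff_map_eq_zero]
  intro φ hφ
  have hcoeff : ∑ i, φ (Pi.single i 1) • α i = 0 := by
    ext v
    have hv := LinearMap.congr_fun hφ v
    have hsingle (i : ι) : (fun j => if i = j then (1 : K) else 0) = Pi.single i 1 := by
      ext j; simp [Pi.single_apply, eq_comm]
    rw [dualMap_apply, pi_apply_eq_sum_univ φ] at hv
    simpa [hsingle, mul_comm] using hv
  refine pi_ext' fun i => ?_
  ext
  simpa using Fintype.linearIndependent_iff.mp hα _ hcoeff i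

theorem LinearIndependent.finrank_iInf_ker_add_card {ι K V : Type*} [Fintype ι] [Field K]
    [AddCommGroup V] [Module K V] [FiniteDimensional K V] {α : ι → Dual K V}
    (hα : LinearIndependent K α) :
    finrank K ↥(⨅ i, ker (α i)) + Fintype.card ι = finrank K V := by
  have := (LinearMap.pi α).finrank_range_add_finrank_ker
  rw [range_eq_top.mpr hα.surjective_pi, finrank_top, ker_pi, finrank_fintype_fun_eq_card] at this
  omega

/-- The Gram matrix of a Darboux basis `eⱼ = (j, 0)`, `fⱼ = (j, 1)`. -/
def stdSymplectic (K : Type*) [Ring K] {κ : Type*} [DecidableEq κ] (p q : κ × Fin 2) : K :=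
  if p.1 = q.1 then ((q.2 : ℕ) : K) - ((p.2 : ℕ) : K) else 0

@[simp]
lemma stdSymplectic_succ (K : Type*) [Ring K] {ℓ : ℕ} (i j : Fin ℓ) (r r' : Fin 2) :
    stdSymplectic K (i.succ, r) (j.succ, r') = stdSymplectic K (i, r) (j, r') := by
  simp [stdSymplectic]

namespace LinearMap.BilinForm

variable {K V : Type*} [Field K] [AddCommGroup V] [Module K V] {B : LinearMap.BilinForm K V}

lemma Nondegenerate.restrict_orthogonal [FiniteDimensional K V] (hB : B.Nondegenerate)
    (hB₀ : B.IsRefl) {W : Submodule K V} (hW : (B.restrict W).Nondegenerate) :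
    (B.restrict (B.orthogonal W)).Nondegenerate := by
  rw [restrict_nondegenerate_iff_isCompl_orthogonal hB₀, orthogonal_orthogonal hB hB₀]
  exact (isCompl_orthogonal_of_restrict_nondegenerate hB₀ hW).symm

lemma IsAlt.apply_linearCombination_pair (hB : B.IsAlt) {x f : V} (hxf : B x f = 1) (a b : K) :
    B (a • x + b • f) x = -b ∧ B (a • x + b • f) f = a := by
  simp [hxf, hB.self_eq_zero, ← LinearMap.IsAlt.neg hB x f]

lemma IsAlt.restrict_span_nondegenerate (hB : B.IsAlt) {x f : V} (hxf : B x f = 1) :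
    (B.restrict (Submodule.span K {x, f})).Nondegenerate := by
  refine (hB.isRefl.domRestrict _).nondegenerate_iff_separatingLeft.mpr ?_
  rintro ⟨m, hm⟩ h
  obtain ⟨a, b, rfl⟩ := Submodule.mem_span_pair.mp hm
  have hx := h ⟨x, Submodule.subset_span (by simp)⟩
  have hf := h ⟨f, Submodule.subset_span (by simp)⟩
  simp only [domRestrict₁₂_apply, (hB.apply_linearCombination_pair hxf a b).1,
    (hB.apply_linearCombination_pair hxf a b).2, neg_eq_zero] at hx hf
  simp [hx, hf]

lemma IsAlt.finrank_span_pair (hB : B.IsAlt) {x f : V} (hxf : B x f = 1) :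
    finrank K (Submodule.span K {x, f}) = 2 := by
  have hli : LinearIndependent K ![x, f] := by
    refine LinearIndependent.pair_iff.mpr fun a b hab => ?_
    have := hB.apply_linearCombination_pair hxf a b
    simp_all
  have := finrank_span_eq_card hli
  rwa [Matrix.range_cons_cons_empty, Fintype.card_fin] at this

theorem exists_stdSymplectic_family [FiniteDimensional K V] (hB : B.IsAlt)
    (hnd : B.Nondegenerate) {ℓ : ℕ} (hV : finrank K V = 2 * ℓ) :
    ∃ s : Fin ℓ × Fin 2 → V, ∀ p q : Fin ℓ × Fin 2, B (s p) (s q) = stdSymplectic K p q := by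
  induction ℓ generalizing V with
  | zero => exact ⟨fun p => p.1.elim0, fun p => p.1.elim0⟩
  | succ ℓ ih =>
    have : Nontrivial V := nontrivial_of_finrank_pos (R := K) (by omega)
    obtain ⟨x, hx⟩ := exists_ne (0 : V)
    obtain ⟨y, hy⟩ : ∃ y, B x y ≠ 0 := by
      by_contra! h
      exact hx (hnd.1 x h)
    set f := (B x y)⁻¹ • y
    have hxf : B x f = 1 := by simp [f, hy]
    set P := Submodule.span K {x, f}
    obtain ⟨s, hs⟩ := ih (B := B.restrict (B.orthogonal P)) (fun w => hB w)
      (hnd.restrict_orthogonal hB.isRefl (hB.restrict_span_nondegenerate hxf))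
      (by rw [finrank_orthogonal hnd, hV, hB.finrank_span_pair hxf]; omega)
    have hxP : ∀ r, ![x, f] r ∈ P := fun r => Submodule.subset_span (by fin_cases r <;> simp)
    have hsP : ∀ p r, B (![x, f] r) (s p) = 0 := fun p r => (s p).2 _ (hxP r)
    refine ⟨fun p => Fin.cases (![x, f] p.2) (fun j => (s (j, p.2) : V)) p.1, ?_⟩
    rintro ⟨i, r⟩ ⟨j, r'⟩
    cases i using Fin.cases <;> cases j using Fin.cases
    · fin_cases r <;> fin_cases r' <;>
        simp [stdSymplectic, hxf, hB.self_eq_zero, ← LinearMap.IsAlt.neg hB x f]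
    · simp [stdSymplectic, hsP, (Fin.succ_ne_zero _).symm]
    · simp [stdSymplectic, hB.eq_iff.mp (hsP _ _)]
    · simpa using hs _ _

end LinearMap.BilinForm

theorem Equiv.Perm.exists_eq_prodCongrLeft_mul_prodCongrRight {α β : Type*} [Finite α]
    [Finite β] (ρ : Perm (α × β)) (h : ∀ a b b', (ρ (a, b)).1 = (ρ (a, b')).1) :
    ∃ (π : Perm α) (c : α → Perm β), ρ = prodCongrLeft (fun _ => π) * prodCongrRight c := by
  obtain hβ | ⟨⟨b₀⟩⟩ := isEmpty_or_nonempty β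
  · exact ⟨1, fun _ => 1, Subsingleton.elim _ _⟩
  have hc (a : α) : Function.Injective fun b => (ρ (a, b)).2 := fun b b' hbb' => by
    simpa using ρ.injective (Prod.ext (h a b b') hbb')
  let c a := Equiv.ofBijective _ (Finite.injective_iff_bijective.mp (hc a))
  have hπ : Function.Injective fun a => (ρ (a, b₀)).1 := fun a a' haa' => by
    obtain ⟨b, hb⟩ := (c a).surjective (ρ (a', b₀)).2
    exact congrArg Prod.fst (ρ.injective (Prod.ext ((h a b b₀).trans haa') hb))
  exact ⟨Equiv.ofBijective _ (Finite.injective_iff_bijective.mp hπ), c,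
    Equiv.ext fun ⟨a, b⟩ => Prod.ext (h a b b₀) rfl⟩

lemma Equiv.Perm.sign_mul_sub_fin_two {R : Type*} [CommRing R] (c : Perm (Fin 2)) :
    ((sign c : ℤ) : R) * (((c 1 : ℕ) : R) - ((c 0 : ℕ) : R)) = 1 := by
  obtain rfl | rfl : c = 1 ∨ c = swap 0 1 := by revert c; decide
  · simp
  · simp [swap_apply_left, swap_apply_right]

section Pfaffian

variable {κ : Type*} [Fintype κ] [DecidableEq κ] {R : Type*} [CommRing R]

lemma sign_mul_prod_stdSymplectic_eq_one (ρ : Perm (κ × Fin 2))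
    (hpairs : ∀ j, (ρ (j, 0)).1 = (ρ (j, 1)).1) :
    ((sign ρ : ℤ) : R) * ∏ j, stdSymplectic R (ρ (j, 0)) (ρ (j, 1)) = 1 := by
  obtain ⟨π, c, rfl⟩ := ρ.exists_eq_prodCongrLeft_mul_prodCongrRight fun j b b' => by
    fin_cases b <;> fin_cases b' <;> simp [hpairs j]
  have hsign : sign (prodCongrLeft (fun _ : Fin 2 => π)) = 1 := by
    simp [sign_prodCongrLeft, Int.units_sq]
  simp only [map_mul, hsign, one_mul, sign_prodCongrRight, Units.coe_prod, Int.cast_prod,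
    ← Finset.prod_mul_distrib]
  refine Finset.prod_eq_one fun j _ => ?_
  simpa [stdSymplectic] using sign_mul_sub_fin_two (c j)

lemma sign_mul_prod_stdSymplectic_nonneg [PartialOrder R] [IsOrderedRing R]
    (ρ : Perm (κ × Fin 2)) :
    0 ≤ ((sign ρ : ℤ) : R) * ∏ j, stdSymplectic R (ρ (j, 0)) (ρ (j, 1)) := by
  by_cases hpairs : ∀ j, (ρ (j, 0)).1 = (ρ (j, 1)).1
  · rw [sign_mul_prod_stdSymplectic_eq_one ρ hpairs]
    exact zero_le_one
  · obtain ⟨j, hj⟩ := not_forall.mp hpairs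
    rw [Finset.prod_eq_zero (Finset.mem_univ j) (by simp [stdSymplectic, hj]), mul_zero]

theorem sum_sign_mul_prod_pos [PartialOrder R] [IsStrictOrderedRing R] {ι : Type*} [Fintype ι]
    [DecidableEq ι] (A : ι → ι ⊕ κ × Fin 2 → R) (hA : ∀ i x, A i x = if x = .inl i then 1 else 0)
    (B : ι ⊕ κ × Fin 2 → ι ⊕ κ × Fin 2 → R)
    (hB : ∀ p q, B (.inr p) (.inr q) = stdSymplectic R p q) :
    0 < ∑ σ : Perm (ι ⊕ κ × Fin 2), ((sign σ : ℤ) : R) *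
      ((∏ i, A i (σ (.inl i))) * ∏ j, B (σ (.inr (j, 0))) (σ (.inr (j, 1)))) := by
  have hterm (σ : Perm (ι ⊕ κ × Fin 2)) : 0 ≤ ((sign σ : ℤ) : R) *
      ((∏ i, A i (σ (.inl i))) * ∏ j, B (σ (.inr (j, 0))) (σ (.inr (j, 1)))) := by
    by_cases hfix : ∀ i, σ (.inl i) = .inl i
    · obtain ⟨⟨σ₁, τ⟩, rfl⟩ := mem_sumCongrHom_range_of_perm_mapsTo_inl
        (σ := σ) (by rintro _ ⟨i, rfl⟩; exact ⟨i, (hfix i).symm⟩)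
      have hσ₁ : σ₁ = 1 := Equiv.ext fun i => Sum.inl_injective (hfix i)
      subst hσ₁
      simpa [hA, hB, sign_sumCongr] using sign_mul_prod_stdSymplectic_nonneg τ
    · obtain ⟨i, hi⟩ := not_forall.mp hfix
      rw [Finset.prod_eq_zero (Finset.mem_univ i) (by simp [hA, hi]), zero_mul, mul_zero]
  calc (0 : R) < 1 := zero_lt_one
    _ = ((sign (1 : Perm (ι ⊕ κ × Fin 2)) : ℤ) : R) *
        ((∏ i, A i (.inl i)) * ∏ j, B (.inr (j, 0)) (.inr (j, 1))) := by
      simp [hA, hB, stdSymplectic]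
    _ ≤ _ := Finset.single_le_sum (fun σ _ => hterm σ) (Finset.mem_univ 1)

end Pfaffian

/-- `inl i ↦ i` and `inr (j, r) ↦ k + 2j + r`, so that the `j`-th factor of `β^ℓ` in `wedgeEval`
reads the slots `inr (j, 0)` and `inr (j, 1)`. -/
def wedgeIndexEquiv (k ℓ : ℕ) : Fin k ⊕ Fin ℓ × Fin 2 ≃ Fin (k + 2 * ℓ) :=
  (sumCongr (Equiv.refl _) (finProdFinEquiv.trans (finCongr (mul_comm ℓ 2)))).trans finSumFinEquiv

lemma wedgeEval_comp_wedgeIndexEquiv_symm (V : Type*) (k ℓ : ℕ) (α : Fin k → V → ℝ)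
    (β : V → V → ℝ) (w : Fin k ⊕ Fin ℓ × Fin 2 → V) :
    wedgeEval V k ℓ α β (w ∘ (wedgeIndexEquiv k ℓ).symm) =
      ∑ σ : Perm (Fin k ⊕ Fin ℓ × Fin 2), ((sign σ : ℤ) : ℝ) *
        ((∏ i, α i (w (σ (.inl i)))) * ∏ j, β (w (σ (.inr (j, 0)))) (w (σ (.inr (j, 1))))) := by
  set e := wedgeIndexEquiv k ℓ
  have hl (i : Fin k) (h) : e.symm ⟨i, h⟩ = .inl i := e.symm_apply_eq.mpr rfl
  have hr₀ (j : Fin ℓ) (h) : e.symm ⟨k + 2 * j, h⟩ = .inr (j, 0) :=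
    e.symm_apply_eq.mpr (by ext; simp [e, wedgeIndexEquiv])
  have hr₁ (j : Fin ℓ) (h) : e.symm ⟨k + 2 * j + 1, h⟩ = .inr (j, 1) :=
    e.symm_apply_eq.mpr (by ext; simp [e, wedgeIndexEquiv]; ring)
  rw [wedgeEval, ← (permCongr e).sum_comp]
  refine Finset.sum_congr rfl fun σ _ => ?_
  simp only [sign_permCongr, permCongr_apply, Function.comp_apply, symm_apply_apply, hl, hr₀, hr₁]

theorem kCosymplectic_of_nondegenerate_on_kernel
    (V : Type*) [AddCommGroup V] [Module ℝ V] [FiniteDimensional ℝ V]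
    (k ℓ : ℕ) (hdim : Module.finrank ℝ V = k + 2 * ℓ)
    (α : Fin k → Module.Dual ℝ V) (hα : LinearIndependent ℝ α)
    (β : V →ₗ[ℝ] V →ₗ[ℝ] ℝ) (hβalt : ∀ v : V, β v v = 0)
    (hβnd : ∀ w ∈ ⨅ i, LinearMap.ker (α i),
      (∀ w' ∈ ⨅ i, LinearMap.ker (α i), β w w' = 0) → w = 0) :
    ∃ v : Fin (k + 2 * ℓ) → V,
      wedgeEval V k ℓ (fun i u => α i u) (fun a b => β a b) v ≠ 0 := by
  classical
  choose u hu using fun j => hα.surjective_pi (Pi.single j (1 : ℝ))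
  have hW : finrank ℝ ↥(⨅ i, ker (α i)) = 2 * ℓ := by
    have := hα.finrank_iInf_ker_add_card
    rw [Fintype.card_fin] at this
    omega
  set W := ⨅ i, ker (α i)
  have hβW_alt : (BilinForm.restrict β W).IsAlt := fun w => hβalt w
  have hβW_nd : (BilinForm.restrict β W).Nondegenerate :=
    hβW_alt.isRefl.nondegenerate_iff_separatingLeft.mpr
      fun w hw => Subtype.ext (hβnd w w.2 fun w' hw' => hw ⟨w', hw'⟩)
  obtain ⟨s, hs⟩ := (BilinForm.restrict β W).exists_stdSymplectic_family hβW_alt hβW_nd hW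
  set w : Fin k ⊕ Fin ℓ × Fin 2 → V := Sum.elim u fun p => s p
  refine ⟨w ∘ (wedgeIndexEquiv k ℓ).symm, ?_⟩
  rw [wedgeEval_comp_wedgeIndexEquiv_symm]
  refine (sum_sign_mul_prod_pos (fun i x => α i (w x)) ?_ (fun x y => β (w x) (w y))
    fun p q => by simpa [w] using hs p q).ne'
  rintro i (j | p)
  · simpa [w, Pi.single_apply, eq_comm] using congr_fun (hu j) i
  · simpa [w] using (Submodule.mem_iInf _).mp (s p).2 i
end

section
/- Let Z be a smooth manifold and define a cochain complex whose degree-p part is Ω^{p−2}(Z)⁶ ⊕ Ω^{p−1}(Z)⁴ (components A₀₀,A₁₀,A₀₁,A₂₀,A₀₂,A₁₁,B₀,B₁,C₀,C₁) with differential sending this tuple to the degree-(p+1) tuple (dA₀₀, dA₁₀+B₀, dA₀₁−C₀, dA₂₀+B₁, dA₀₂−C₁, dA₁₁, −dB₀, −dB₁, −dC₀, −dC₁, …) as in the singular part of the B_i-complex. Then the degree-p cohomology of this complex is isomorphic to H^{p−2}(Z) ⊕ H^{p−2}(Z), detected by the classes [A₀₀] and [A₁₁]. -/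
/-!
STATEMENT 11: The quotient complex whose degree-p part is Ω^{p−2}(Z)⁶ ⊕ Ω^{p−1}(Z)⁴
(components A₀₀,A₁₀,A₀₁,A₂₀,A₀₂,A₁₁ and B₀,B₁,C₀,C₁), with differential
(A,B,C) ↦ (dA₀₀, dA₁₀+B₀, dA₀₁−C₀, dA₂₀+B₁, dA₀₂−C₁, dA₁₁, −dB₀, −dB₁, −dC₀, −dC₁),
has degree-p cohomology isomorphic to H^{p−2}(Z) ⊕ H^{p−2}(Z), detected by [A₀₀], [A₁₁].
We abstract the de Rham complex of Z to four consecutive terms M0 → M1 → M2 → M3,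
modeling Ω^{p−3}(Z), Ω^{p−2}(Z), Ω^{p−1}(Z), Ω^p(Z); the degree-p part of the quotient
complex is (Fin 6 → M1) × (Fin 4 → M2), with A-components indexed
0 ↦ A₀₀, 1 ↦ A₁₀, 2 ↦ A₀₁, 3 ↦ A₂₀, 4 ↦ A₀₂, 5 ↦ A₁₁ and B,C-components indexed
0 ↦ B₀, 1 ↦ B₁, 2 ↦ C₀, 3 ↦ C₁; and H^{p−2}(Z) = ker d₁ / im d₀.
-/

/-- One step of the quotient complex. -/
noncomputable def DstepB {A B C : Type*} [AddCommGroup A] [AddCommGroup B] [AddCommGroup C]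
    [Module ℝ A] [Module ℝ B] [Module ℝ C]
    (dA : A →ₗ[ℝ] B) (dB : B →ₗ[ℝ] C) :
    ((Fin 6 → A) × (Fin 4 → B)) →ₗ[ℝ] ((Fin 6 → B) × (Fin 4 → C)) :=
  let pA : Fin 6 → (((Fin 6 → A) × (Fin 4 → B)) →ₗ[ℝ] A) :=
    fun i => (LinearMap.proj i) ∘ₗ (LinearMap.fst ℝ (Fin 6 → A) (Fin 4 → B))
  let pB : Fin 4 → (((Fin 6 → A) × (Fin 4 → B)) →ₗ[ℝ] B) :=
    fun j => (LinearMap.proj j) ∘ₗ (LinearMap.snd ℝ (Fin 6 → A) (Fin 4 → B))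
  (LinearMap.pi
      ![dA ∘ₗ pA 0, dA ∘ₗ pA 1 + pB 0, dA ∘ₗ pA 2 - pB 2,
        dA ∘ₗ pA 3 + pB 1, dA ∘ₗ pA 4 - pB 3, dA ∘ₗ pA 5]).prod
    (LinearMap.pi fun j => -(dB ∘ₗ pB j))

/-! The differential pairs `A₁₀` with `B₀`, `A₂₀` with `B₁`, `A₀₁` with `C₀` and `A₀₂` with `C₁`
through an identity map, so these four pieces form acyclic cones and drop out of cohomology; what
remains is two copies of `d0, d1` carried by `A₀₀` and `A₁₁`. Hence `([A₀₀], [A₁₁])` maps the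
closed elements onto two copies of `ker d1 / im d0`, with kernel exactly the exact elements. -/

section DstepB

variable {Z A B C : Type*} [AddCommGroup Z] [AddCommGroup A] [AddCommGroup B] [AddCommGroup C]
  [Module ℝ Z] [Module ℝ A] [Module ℝ B] [Module ℝ C]
  (dZ : Z →ₗ[ℝ] A) (dA : A →ₗ[ℝ] B) (dB : B →ₗ[ℝ] C)

@[simp]
lemma DstepB_apply_fst (x : (Fin 6 → A) × (Fin 4 → B)) :
    (DstepB dA dB x).1 =
      ![dA (x.1 0), dA (x.1 1) + x.2 0, dA (x.1 2) - x.2 2,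
        dA (x.1 3) + x.2 1, dA (x.1 4) - x.2 3, dA (x.1 5)] := by
  funext i
  fin_cases i <;> rfl

@[simp]
lemma DstepB_apply_snd (x : (Fin 6 → A) × (Fin 4 → B)) (j : Fin 4) :
    (DstepB dA dB x).2 j = -dB (x.2 j) :=
  rfl

lemma mem_ker_DstepB_iff (x : (Fin 6 → A) × (Fin 4 → B)) :
    x ∈ LinearMap.ker (DstepB dA dB) ↔
      dA (x.1 0) = 0 ∧ dA (x.1 5) = 0 ∧
      x.2 0 = -dA (x.1 1) ∧ x.2 1 = -dA (x.1 3) ∧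
      x.2 2 = dA (x.1 2) ∧ x.2 3 = dA (x.1 4) ∧ ∀ j, dB (x.2 j) = 0 := by
  rw [eq_comm (a := x.2 2), eq_comm (a := x.2 3)]
  simp only [LinearMap.mem_ker, Prod.ext_iff, funext_iff, Fin.forall_fin_succ, DstepB_apply_fst,
    DstepB_apply_snd, Prod.fst_zero, Prod.snd_zero, Pi.zero_apply, neg_eq_zero,
    Matrix.cons_val_zero, Matrix.cons_val_succ, add_eq_zero_iff_eq_neg', sub_eq_zero,
    IsEmpty.forall_iff, and_true]
  tauto

/-- If `A₀₀ = dZ u` and `A₁₁ = dZ v`, a primitive is `(u, 0, 0, 0, 0, v; A₁₀, A₂₀, -A₀₁, -A₀₂)`. -/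
lemma mem_range_DstepB_iff_of_mem_ker {x : (Fin 6 → A) × (Fin 4 → B)}
    (hx : x ∈ LinearMap.ker (DstepB dA dB)) :
    x ∈ LinearMap.range (DstepB dZ dA) ↔
      x.1 0 ∈ LinearMap.range dZ ∧ x.1 5 ∈ LinearMap.range dZ := by
  constructor
  · rintro ⟨y, rfl⟩
    exact ⟨⟨y.1 0, by simp⟩, ⟨y.1 5, by simp⟩⟩
  · rintro ⟨⟨u, hu⟩, ⟨v, hv⟩⟩
    obtain ⟨-, -, hB₀, hB₁, hC₀, hC₁, -⟩ := (mem_ker_DstepB_iff dA dB x).1 hx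
    refine ⟨(![u, 0, 0, 0, 0, v], ![x.1 1, x.1 3, -x.1 2, -x.1 4]), Prod.ext ?_ ?_⟩
    · funext i
      fin_cases i <;> simp [hu, hv]
    · funext j
      fin_cases j <;> simp [hB₀, hB₁, hC₀, hC₁]

end DstepB

section Cohomology

variable {M0 M1 M2 M3 : Type*} [AddCommGroup M0] [AddCommGroup M1] [AddCommGroup M2]
  [AddCommGroup M3] [Module ℝ M0] [Module ℝ M1] [Module ℝ M2] [Module ℝ M3]
  (d0 : M0 →ₗ[ℝ] M1) (d1 : M1 →ₗ[ℝ] M2) (d2 : M2 →ₗ[ℝ] M3)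

/-- The components `(A₀₀, A₁₁)` of a closed element. -/
noncomputable def DstepB.cyclePair :
    LinearMap.ker (DstepB d1 d2) →ₗ[ℝ] LinearMap.ker d1 × LinearMap.ker d1 :=
  let component (i : Fin 6) : LinearMap.ker (DstepB d1 d2) →ₗ[ℝ] M1 :=
    LinearMap.proj i ∘ₗ LinearMap.fst ℝ _ _ ∘ₗ (LinearMap.ker (DstepB d1 d2)).subtype
  (LinearMap.codRestrict _ (component 0) fun x =>
      LinearMap.mem_ker.2 ((mem_ker_DstepB_iff d1 d2 x.1).1 x.2).1).prod
    (LinearMap.codRestrict _ (component 5) fun x =>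
      LinearMap.mem_ker.2 ((mem_ker_DstepB_iff d1 d2 x.1).1 x.2).2.1)

@[simp]
lemma DstepB.cyclePair_apply (x : LinearMap.ker (DstepB d1 d2)) :
    DstepB.cyclePair d1 d2 x = (⟨x.1.1 0, ((mem_ker_DstepB_iff d1 d2 _).1 x.2).1⟩,
      ⟨x.1.1 5, ((mem_ker_DstepB_iff d1 d2 _).1 x.2).2.1⟩) :=
  rfl

lemma DstepB.cyclePair_surjective : Function.Surjective (DstepB.cyclePair d1 d2) := by
  rintro ⟨a, b⟩
  have hx : (![a.1, 0, 0, 0, 0, b.1], 0) ∈ LinearMap.ker (DstepB d1 d2) := by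
    refine (mem_ker_DstepB_iff d1 d2 _).2 ?_
    simp [LinearMap.mem_ker.1 a.2, LinearMap.mem_ker.1 b.2]
  exact ⟨⟨_, hx⟩, by simp⟩

noncomputable def DstepB.classes :
    LinearMap.ker (DstepB d1 d2) →ₗ[ℝ]
      (LinearMap.ker d1 ⧸ (LinearMap.range d0).comap (LinearMap.ker d1).subtype) ×
        (LinearMap.ker d1 ⧸ (LinearMap.range d0).comap (LinearMap.ker d1).subtype) :=
  (Submodule.mkQ _).prodMap (Submodule.mkQ _) ∘ₗ DstepB.cyclePair d1 d2

lemma DstepB.classes_surjective : Function.Surjective (DstepB.classes d0 d1 d2) :=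
  ((Submodule.mkQ_surjective _).prodMap (Submodule.mkQ_surjective _)).comp
    (DstepB.cyclePair_surjective d1 d2)

lemma DstepB.ker_classes :
    LinearMap.ker (DstepB.classes d0 d1 d2) =
      (LinearMap.range (DstepB d0 d1)).comap (LinearMap.ker (DstepB d1 d2)).subtype := by
  ext x
  simp [DstepB.classes, mem_range_DstepB_iff_of_mem_ker d0 d1 d2 x.2]

end Cohomology

theorem quotient_complex_cohomology_two_copies_general
    (M0 M1 M2 M3 : Type*)
    [AddCommGroup M0] [AddCommGroup M1] [AddCommGroup M2] [AddCommGroup M3]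
    [Module ℝ M0] [Module ℝ M1] [Module ℝ M2] [Module ℝ M3]
    (d0 : M0 →ₗ[ℝ] M1) (d1 : M1 →ₗ[ℝ] M2) (d2 : M2 →ₗ[ℝ] M3) :
    Nonempty
      ((↥(LinearMap.ker (DstepB d1 d2)) ⧸
          (LinearMap.range (DstepB d0 d1)).comap (LinearMap.ker (DstepB d1 d2)).subtype)
        ≃ₗ[ℝ]
       ((↥(LinearMap.ker d1) ⧸
          (LinearMap.range d0).comap (LinearMap.ker d1).subtype) ×
        (↥(LinearMap.ker d1) ⧸
          (LinearMap.range d0).comap (LinearMap.ker d1).subtype))) := by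
  exact ⟨(Submodule.quotEquivOfEq _ _ (DstepB.ker_classes d0 d1 d2).symm).trans
    ((DstepB.classes d0 d1 d2).quotKerEquivOfSurjective (DstepB.classes_surjective d0 d1 d2))⟩

theorem quotient_complex_cohomology_two_copies
    (M0 M1 M2 M3 : Type*)
    [AddCommGroup M0] [AddCommGroup M1] [AddCommGroup M2] [AddCommGroup M3]
    [Module ℝ M0] [Module ℝ M1] [Module ℝ M2] [Module ℝ M3]
    (d0 : M0 →ₗ[ℝ] M1) (d1 : M1 →ₗ[ℝ] M2) (d2 : M2 →ₗ[ℝ] M3)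
    (h10 : d1 ∘ₗ d0 = 0) (h21 : d2 ∘ₗ d1 = 0) :
    Nonempty
      ((↥(LinearMap.ker (DstepB d1 d2)) ⧸
          (LinearMap.range (DstepB d0 d1)).comap (LinearMap.ker (DstepB d1 d2)).subtype)
        ≃ₗ[ℝ]
       ((↥(LinearMap.ker d1) ⧸
          (LinearMap.range d0).comap (LinearMap.ker d1).subtype) ×
        (↥(LinearMap.ker d1) ⧸
          (LinearMap.range d0).comap (LinearMap.ker d1).subtype))) :=
  quotient_complex_cohomology_two_copies_general M0 M1 M2 M3 d0 d1 d2
end
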